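/- arXiv:quant-ph/0104093 — 5 statements merged into one kernel-verified Lean document; each statement's English description precedes it below -/
import Mathlib

section
/- Let H1 and H2 be finite-dimensional complex Hilbert spaces. Let a_1,...,a_n be non-collinear unit vectors in H1 and b_1,...,b_n be non-collinear unit vectors in H2, with at least one of the families (a_j), (b_j) linearly independent, and w_j > 0; likewise A_1,...,A_N non-collinear unit vectors in H1, B_1,...,B_N non-collinear unit vectors in H2, at least one of (A_k), (B_k) linearly independent, and W_k > 0. If Σ_{j=1}^{n} w_j |a_j ⊗ b_j⟩⟨a_j ⊗ b_j| = Σ_{k=1}^{N} W_k |A_k ⊗ B_k⟩⟨A_k ⊗ B_k| as operators on H1 ⊗ H2, then N = n. -/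
open scoped TensorProduct

/-!
The form `inn` is the inner product of `H1 ⊗ H2`, and the vectors `a j ⊗ b j` are linearly
independent because one factor family is and the other does not vanish. For linearly independent
`v i` and nonzero `c i`, the operator `∑ c i |v i⟩⟨v i|` has kernel `(span v)ᗮ`, hence rank equal
to the number of terms, so the common operator has rank `n` and `N`.
-/

def IsCollinear {H : Type*} [AddCommGroup H] [Module ℂ H] (u v : H) : Prop :=
  ∃ c : ℂ, ‖c‖ = 1 ∧ u = c • v

open Module Submodule TensorProduct InnerProductSpace

theorem LinearIndependent.tmul_of_ne_zero_right {K M N ι : Type*} [Field K]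
    [AddCommGroup M] [Module K M] [AddCommGroup N] [Module K N] {a : ι → M} {b : ι → N}
    (ha : LinearIndependent K a) (hb : ∀ i, b i ≠ 0) :
    LinearIndependent K fun i ↦ a i ⊗ₜ[K] b i := by
  rw [linearIndependent_iff'] at ha ⊢
  intro s g hg i hi
  obtain ⟨f, hf⟩ := Projective.exists_dual_eq_one K (hb i)
  have hcontract : ∑ j ∈ s, (g j * f (b j)) • a j = 0 := by
    simpa [mul_smul] using congrArg ((TensorProduct.rid K M).toLinearMap ∘ₗ f.lTensor M) hg
  simpa [hf] using ha s _ hcontract i hi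

theorem LinearIndependent.tmul_of_ne_zero_left {K M N ι : Type*} [Field K]
    [AddCommGroup M] [Module K M] [AddCommGroup N] [Module K N] {a : ι → M} {b : ι → N}
    (ha : ∀ i, a i ≠ 0) (hb : LinearIndependent K b) :
    LinearIndependent K fun i ↦ a i ⊗ₜ[K] b i :=
  (hb.tmul_of_ne_zero_right ha).map' (TensorProduct.comm K N M).toLinearMap
    (TensorProduct.comm K N M).ker

theorem TensorProduct.eq_innerₛₗ_of_apply_tmul {𝕜 E F : Type*} [RCLike 𝕜]
    [NormedAddCommGroup E] [InnerProductSpace 𝕜 E] [NormedAddCommGroup F] [InnerProductSpace 𝕜 F]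
    (f : E ⊗[𝕜] F →ₗ⋆[𝕜] E ⊗[𝕜] F →ₗ[𝕜] 𝕜)
    (hf : ∀ (x x' : E) (y y' : F),
      f (x ⊗ₜ y) (x' ⊗ₜ y') = (inner 𝕜 x x' : 𝕜) * (inner 𝕜 y y' : 𝕜)) :
    f = innerₛₗ 𝕜 :=
  TensorProduct.ext' fun x y ↦ TensorProduct.ext' fun x' y' ↦ by simp [hf]

section RankOne

variable {𝕜 E ι : Type*} [RCLike 𝕜] [NormedAddCommGroup E] [InnerProductSpace 𝕜 E] [Fintype ι]
  {v : ι → E} {c : ι → 𝕜}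

theorem ker_sum_smul_rankOne_self (hv : LinearIndependent 𝕜 v) (hc : ∀ i, c i ≠ 0) :
    LinearMap.ker ((∑ i, c i • rankOne 𝕜 (v i) (v i) : E →L[𝕜] E) : E →ₗ[𝕜] E) =
      (span 𝕜 (Set.range v))ᗮ := by
  ext y
  have hTy : (∑ i, c i • rankOne 𝕜 (v i) (v i)) y = ∑ i, (c i * inner 𝕜 (v i) y) • v i := by
    simp [mul_smul]
  simp only [LinearMap.mem_ker, ContinuousLinearMap.coe_coe, hTy, span_range_eq_iSup,
    ← iInf_orthogonal, mem_iInf, mem_orthogonal_singleton_iff_inner_right]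
  refine ⟨fun h i ↦ ?_, fun h ↦ by simp [h]⟩
  exact (mul_eq_zero.mp (Fintype.linearIndependent_iff.mp hv _ h i)).resolve_left (hc i)

theorem finrank_range_sum_smul_rankOne_self [FiniteDimensional 𝕜 E]
    (hv : LinearIndependent 𝕜 v) (hc : ∀ i, c i ≠ 0) :
    finrank 𝕜 (LinearMap.range ((∑ i, c i • rankOne 𝕜 (v i) (v i) : E →L[𝕜] E) : E →ₗ[𝕜] E)) =
      Fintype.card ι := by
  have hker := LinearMap.finrank_range_add_finrank_ker
    (∑ i, c i • rankOne 𝕜 (v i) (v i) : E →L[𝕜] E).toLinearMap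
  rw [ker_sum_smul_rankOne_self hv hc, ← finrank_add_finrank_orthogonal (span 𝕜 (Set.range v)),
    finrank_span_eq_card hv] at hker
  omega

end RankOne

theorem convex_sum_of_products_of_projectors_card_eq_general
    {H1 H2 : Type*}
    [NormedAddCommGroup H1] [InnerProductSpace ℂ H1] [FiniteDimensional ℂ H1]
    [NormedAddCommGroup H2] [InnerProductSpace ℂ H2] [FiniteDimensional ℂ H2]
    (inn : (H1 ⊗[ℂ] H2) →ₗ⋆[ℂ] (H1 ⊗[ℂ] H2) →ₗ[ℂ] ℂ)
    (hinn : ∀ (x1 y1 : H1) (x2 y2 : H2),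
      inn (x1 ⊗ₜ[ℂ] x2) (y1 ⊗ₜ[ℂ] y2) = (inner ℂ x1 y1 : ℂ) * (inner ℂ x2 y2 : ℂ))
    {n N : ℕ}
    (a : Fin n → H1) (b : Fin n → H2) (w : Fin n → ℝ)
    (A : Fin N → H1) (B : Fin N → H2) (W : Fin N → ℝ)
    (ha1 : ∀ j, ‖a j‖ = 1) (hb1 : ∀ j, ‖b j‖ = 1)
    (hA1 : ∀ k, ‖A k‖ = 1) (hB1 : ∀ k, ‖B k‖ = 1)
    (hli : LinearIndependent ℂ a ∨ LinearIndependent ℂ b)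
    (hLI : LinearIndependent ℂ A ∨ LinearIndependent ℂ B)
    (hw : ∀ j, 0 < w j) (hW : ∀ k, 0 < W k)
    (heq : ∀ y : H1 ⊗[ℂ] H2,
      ∑ j, (w j : ℂ) • (inn (a j ⊗ₜ[ℂ] b j) y • (a j ⊗ₜ[ℂ] b j)) =
      ∑ k, (W k : ℂ) • (inn (A k ⊗ₜ[ℂ] B k) y • (A k ⊗ₜ[ℂ] B k))) :
    N = n := by
  have tmul_linearIndependent {m : ℕ} {x : Fin m → H1} {y : Fin m → H2}
      (hx : ∀ j, ‖x j‖ = 1) (hy : ∀ j, ‖y j‖ = 1)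
      (h : LinearIndependent ℂ x ∨ LinearIndependent ℂ y) :
      LinearIndependent ℂ fun j ↦ x j ⊗ₜ[ℂ] y j :=
    h.elim (·.tmul_of_ne_zero_right fun j ↦ ne_zero_of_norm_ne_zero (by simp [hy j]))
      (LinearIndependent.tmul_of_ne_zero_left fun j ↦ ne_zero_of_norm_ne_zero (by simp [hx j]))
  obtain rfl := TensorProduct.eq_innerₛₗ_of_apply_tmul inn hinn
  have hT : (∑ j, (w j : ℂ) • rankOne ℂ (a j ⊗ₜ[ℂ] b j) (a j ⊗ₜ[ℂ] b j)) =
      ∑ k, (W k : ℂ) • rankOne ℂ (A k ⊗ₜ[ℂ] B k) (A k ⊗ₜ[ℂ] B k) := by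
    ext y; simpa using heq y
  have hn := finrank_range_sum_smul_rankOne_self (tmul_linearIndependent ha1 hb1 hli)
    fun j ↦ Complex.ofReal_ne_zero.mpr (hw j).ne'
  have hN := finrank_range_sum_smul_rankOne_self (tmul_linearIndependent hA1 hB1 hLI)
    fun k ↦ Complex.ofReal_ne_zero.mpr (hW k).ne'
  rw [hT, hN] at hn
  simpa using hn

/-- If two convex sums of products of pairs of 1-projectors (each with non-collinear unit
vectors and one linearly independent family) represent the same operator on `H1 ⊗ H2`,
then they have the same number of terms.  Here `inn` is the inner product on `H1 ⊗[ℂ] H2`,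
the unique sesquilinear form with `inn (x1 ⊗ x2) (y1 ⊗ y2) = ⟨x1,y1⟩⟨x2,y2⟩`, and the
rank-one projector `|x⟩⟨x|` sends `y` to `inn x y • x`. -/
theorem convex_sum_of_products_of_projectors_card_eq
    {H1 H2 : Type*}
    [NormedAddCommGroup H1] [InnerProductSpace ℂ H1] [FiniteDimensional ℂ H1]
    [NormedAddCommGroup H2] [InnerProductSpace ℂ H2] [FiniteDimensional ℂ H2]
    (inn : (H1 ⊗[ℂ] H2) →ₗ⋆[ℂ] (H1 ⊗[ℂ] H2) →ₗ[ℂ] ℂ)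
    (hinn : ∀ (x1 y1 : H1) (x2 y2 : H2),
      inn (x1 ⊗ₜ[ℂ] x2) (y1 ⊗ₜ[ℂ] y2) = (inner ℂ x1 y1 : ℂ) * (inner ℂ x2 y2 : ℂ))
    {n N : ℕ}
    (a : Fin n → H1) (b : Fin n → H2) (w : Fin n → ℝ)
    (A : Fin N → H1) (B : Fin N → H2) (W : Fin N → ℝ)
    (ha1 : ∀ j, ‖a j‖ = 1) (hb1 : ∀ j, ‖b j‖ = 1)
    (hA1 : ∀ k, ‖A k‖ = 1) (hB1 : ∀ k, ‖B k‖ = 1)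
    (hanc : ∀ i j, i ≠ j → ¬ IsCollinear (a i) (a j))
    (hbnc : ∀ i j, i ≠ j → ¬ IsCollinear (b i) (b j))
    (hAnc : ∀ i j, i ≠ j → ¬ IsCollinear (A i) (A j))
    (hBnc : ∀ i j, i ≠ j → ¬ IsCollinear (B i) (B j))
    (hli : LinearIndependent ℂ a ∨ LinearIndependent ℂ b)
    (hLI : LinearIndependent ℂ A ∨ LinearIndependent ℂ B)
    (hw : ∀ j, 0 < w j) (hW : ∀ k, 0 < W k)
    (heq : ∀ y : H1 ⊗[ℂ] H2,
      ∑ j, (w j : ℂ) • (inn (a j ⊗ₜ[ℂ] b j) y • (a j ⊗ₜ[ℂ] b j)) =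
      ∑ k, (W k : ℂ) • (inn (A k ⊗ₜ[ℂ] B k) y • (A k ⊗ₜ[ℂ] B k))) :
    N = n :=
  convex_sum_of_products_of_projectors_card_eq_general inn hinn a b w A B W ha1 hb1 hA1 hB1 hli hLI
    hw hW heq
end

section
/- Let H1, H2, H3 be finite-dimensional complex Hilbert spaces. Let a_1,...,a_n ∈ H1 be linearly independent unit vectors, b_1,...,b_n ∈ H2 unit vectors, c_1,...,c_n ∈ H3 linearly independent unit vectors, and φ_1,...,φ_n nonzero complex numbers; likewise let A_1,...,A_N ∈ H1 be linearly independent unit vectors, B_1,...,B_N ∈ H2 unit vectors, C_1,...,C_N ∈ H3 linearly independent unit vectors, and ψ_1,...,ψ_N nonzero complex numbers. If Σ_{j=1}^{n} φ_j (a_j ⊗ b_j ⊗ c_j) = Σ_{k=1}^{N} ψ_k (A_k ⊗ B_k ⊗ C_k) in H1 ⊗ H2 ⊗ H3, then N = n. -/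
/-!
Contracting the third tensor factor against the functionals dual to the linearly independent
family `c` isolates each `φ j • a j ⊗ b j`, and the same contraction applied to the other
decomposition lands in the span of the `A k ⊗ B k`. By symmetry both decompositions span the
same subspace of `H1 ⊗ H2`. Since `a` is linearly independent and every `b j` is nonzero, the
`a j ⊗ b j` are linearly independent, so that subspace has dimension `n`, and likewise `N`.
-/

open scoped TensorProduct
open Module Submodule Set

section

variable {K U V W : Type*} [Field K] [AddCommGroup U] [Module K U] [AddCommGroup V] [Module K V]
  [AddCommGroup W] [Module K W]

lemma LinearIndependent.exists_dual_apply_eq_ite {ι : Type*} [DecidableEq ι] {c : ι → V}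
    (hc : LinearIndependent K c) :
    ∃ f : ι → Dual K V, ∀ i j, f i (c j) = if i = j then 1 else 0 := by
  let bs := Basis.span hc
  choose f hf using fun i => LinearMap.exists_extend (V' := K) (bs.coord i)
  refine ⟨f, fun i j => ?_⟩
  have hmem : c j ∈ span K (range c) := subset_span ⟨j, rfl⟩
  calc f i (c j) = bs.coord i ⟨c j, hmem⟩ := LinearMap.congr_fun (hf i) ⟨c j, hmem⟩
    _ = bs.coord i (bs j) := by rw [Basis.span_apply]
    _ = if i = j then 1 else 0 := by
      rw [Basis.coord_apply, Basis.repr_self, Finsupp.single_apply]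
      exact if_congr eq_comm rfl rfl

lemma LinearIndependent.tmul_of_ne_zero {ι : Type*} {a : ι → V} {b : ι → W}
    (ha : LinearIndependent K a) (hb : ∀ i, b i ≠ 0) :
    LinearIndependent K fun i => a i ⊗ₜ[K] b i := by
  classical
  obtain ⟨f, hf⟩ := ha.exists_dual_apply_eq_ite
  rw [linearIndependent_iff']
  intro s g hg i hi
  have h := congrArg (fun x => TensorProduct.lid K W (TensorProduct.map (f i) LinearMap.id x)) hg
  simp only [map_sum, map_smul, TensorProduct.map_tmul, TensorProduct.lid_tmul, LinearMap.id_coe,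
    id_eq, map_zero, hf, ite_smul, one_smul, zero_smul, smul_ite, smul_zero, Finset.sum_ite_eq,
    if_pos hi] at h
  exact (smul_eq_zero.mp h).resolve_right (hb i)

lemma rid_lTensor_sum_smul_tmul {ι : Type*} [Fintype ι] (g : Dual K W) (φ : ι → K) (u : ι → U)
    (w : ι → W) :
    TensorProduct.rid K U (LinearMap.lTensor U g (∑ i, φ i • u i ⊗ₜ[K] w i)) =
      ∑ i, (φ i * g (w i)) • u i := by
  simp only [map_sum, map_smul, LinearMap.lTensor_tmul, TensorProduct.rid_tmul, smul_smul]

section TwoDecompositions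

variable {ι κ : Type*} [Fintype ι] [Fintype κ] {φ : ι → K} {u : ι → U} {w : ι → W}
  {ψ : κ → K} {u' : κ → U} {w' : κ → W}

lemma mem_span_of_sum_smul_tmul_eq (hw : LinearIndependent K w) (hφ : ∀ i, φ i ≠ 0)
    (h : ∑ i, φ i • u i ⊗ₜ[K] w i = ∑ k, ψ k • u' k ⊗ₜ[K] w' k) (i : ι) :
    u i ∈ span K (range u') := by
  classical
  obtain ⟨f, hf⟩ := hw.exists_dual_apply_eq_ite
  have hcontract := congrArg (fun x => TensorProduct.rid K U (LinearMap.lTensor U (f i) x)) h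
  simp only [rid_lTensor_sum_smul_tmul, hf, mul_ite, mul_one, mul_zero, ite_smul, zero_smul,
    Finset.sum_ite_eq, Finset.mem_univ, if_true] at hcontract
  rw [← smul_mem_iff _ (hφ i), hcontract]
  exact sum_mem fun k _ => smul_mem _ _ (subset_span ⟨k, rfl⟩)

lemma span_eq_of_sum_smul_tmul_eq (hw : LinearIndependent K w) (hw' : LinearIndependent K w')
    (hφ : ∀ i, φ i ≠ 0) (hψ : ∀ k, ψ k ≠ 0)
    (h : ∑ i, φ i • u i ⊗ₜ[K] w i = ∑ k, ψ k • u' k ⊗ₜ[K] w' k) :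
    span K (range u) = span K (range u') :=
  le_antisymm (span_le.mpr (range_subset_iff.mpr (mem_span_of_sum_smul_tmul_eq hw hφ h)))
    (span_le.mpr (range_subset_iff.mpr (mem_span_of_sum_smul_tmul_eq hw' hψ h.symm)))

end TwoDecompositions

end

theorem tridecomposition_card_eq_general
    {H1 H2 H3 : Type*}
    [NormedAddCommGroup H1] [InnerProductSpace ℂ H1]
    [NormedAddCommGroup H2] [InnerProductSpace ℂ H2]
    [NormedAddCommGroup H3] [InnerProductSpace ℂ H3]
    {n N : ℕ}
    (a : Fin n → H1) (b : Fin n → H2) (c : Fin n → H3) (φ : Fin n → ℂ)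
    (A : Fin N → H1) (B : Fin N → H2) (C : Fin N → H3) (ψ : Fin N → ℂ)
    (hb1 : ∀ j, ‖b j‖ = 1)
    (hB1 : ∀ k, ‖B k‖ = 1)
    (hali : LinearIndependent ℂ a) (hcli : LinearIndependent ℂ c)
    (hALI : LinearIndependent ℂ A) (hCLI : LinearIndependent ℂ C)
    (hφ : ∀ j, φ j ≠ 0) (hψ : ∀ k, ψ k ≠ 0)
    (heq : ∑ j, φ j • ((a j ⊗ₜ[ℂ] b j) ⊗ₜ[ℂ] c j) =
           ∑ k, ψ k • ((A k ⊗ₜ[ℂ] B k) ⊗ₜ[ℂ] C k)) :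
    N = n := by
  have hb : ∀ j, b j ≠ 0 := fun j => norm_ne_zero_iff.mp (by simp [hb1 j])
  have hB : ∀ k, B k ≠ 0 := fun k => norm_ne_zero_iff.mp (by simp [hB1 k])
  have hspan := span_eq_of_sum_smul_tmul_eq hcli hCLI hφ hψ heq
  calc N = finrank ℂ (span ℂ (range fun k => A k ⊗ₜ[ℂ] B k)) := by
        rw [finrank_span_eq_card (hALI.tmul_of_ne_zero hB), Fintype.card_fin]
    _ = finrank ℂ (span ℂ (range fun j => a j ⊗ₜ[ℂ] b j)) := by rw [hspan]
    _ = n := by rw [finrank_span_eq_card (hali.tmul_of_ne_zero hb), Fintype.card_fin]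

/-- Two tridecompositions of the same vector of `H1 ⊗ H2 ⊗ H3`, each with nonzero
coefficients, unit vectors, and the first and third families linearly independent,
have the same number of terms. -/
theorem tridecomposition_card_eq
    {H1 H2 H3 : Type*}
    [NormedAddCommGroup H1] [InnerProductSpace ℂ H1] [FiniteDimensional ℂ H1]
    [NormedAddCommGroup H2] [InnerProductSpace ℂ H2] [FiniteDimensional ℂ H2]
    [NormedAddCommGroup H3] [InnerProductSpace ℂ H3] [FiniteDimensional ℂ H3]
    {n N : ℕ}
    (a : Fin n → H1) (b : Fin n → H2) (c : Fin n → H3) (φ : Fin n → ℂ)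
    (A : Fin N → H1) (B : Fin N → H2) (C : Fin N → H3) (ψ : Fin N → ℂ)
    (ha1 : ∀ j, ‖a j‖ = 1) (hb1 : ∀ j, ‖b j‖ = 1) (hc1 : ∀ j, ‖c j‖ = 1)
    (hA1 : ∀ k, ‖A k‖ = 1) (hB1 : ∀ k, ‖B k‖ = 1) (hC1 : ∀ k, ‖C k‖ = 1)
    (hali : LinearIndependent ℂ a) (hcli : LinearIndependent ℂ c)
    (hALI : LinearIndependent ℂ A) (hCLI : LinearIndependent ℂ C)
    (hφ : ∀ j, φ j ≠ 0) (hψ : ∀ k, ψ k ≠ 0)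
    (heq : ∑ j, φ j • ((a j ⊗ₜ[ℂ] b j) ⊗ₜ[ℂ] c j) =
           ∑ k, ψ k • ((A k ⊗ₜ[ℂ] B k) ⊗ₜ[ℂ] C k)) :
    N = n :=
  tridecomposition_card_eq_general a b c φ A B C ψ hb1 hB1 hali hcli hALI hCLI hφ hψ heq
end

section
/- Let H1 and H2 be finite-dimensional complex Hilbert spaces, let a_1,...,a_n ∈ H1 and b_1,...,b_n ∈ H2 be unit vectors, let w_1,...,w_n > 0, and let ρ be the operator on H1 ⊗ H2 given by ρ = Σ_{j=1}^{n} w_j |a_j ⊗ b_j⟩⟨a_j ⊗ b_j|. Define the null space of ρ on H1 as N1 = { φ ∈ H1 : ρ(φ ⊗ β) = 0 for every β ∈ H2 }. Then the span of {a_1,...,a_n} equals the orthogonal complement of N1 in H1. -/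
open scoped TensorProduct

/-! Testing `ρ(φ ⊗ b_k) = 0` against `φ ⊗ b_k` gives `Σ_j w_j |⟨a_j, φ⟩|² |⟨b_j, b_k⟩|² = 0`, a sum
of nonnegative terms whose `j = k` term is `w_k |⟨a_k, φ⟩|²`. Hence `N1` is exactly the orthogonal
complement of `span {a_j}`, and taking the orthogonal complement once more returns the span. -/

theorem mem_orthogonal_span_range_iff {E ι : Type*} [NormedAddCommGroup E]
    [InnerProductSpace ℂ E] (a : ι → E) (φ : E) :
    φ ∈ (Submodule.span ℂ (Set.range a))ᗮ ↔ ∀ j, inner ℂ (a j) φ = 0 := by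
  rw [Submodule.mem_orthogonal']
  change Submodule.span ℂ (Set.range a) ≤ LinearMap.ker (innerₛₗ ℂ φ) ↔ _
  simp [Submodule.span_le, Set.range_subset_iff, inner_eq_zero_symm]

section TmulProjSum

variable {H1 H2 ι : Type*} [Fintype ι]
  [NormedAddCommGroup H1] [InnerProductSpace ℂ H1] [NormedAddCommGroup H2] [InnerProductSpace ℂ H2]

/-- The operator `ρ = Σ_j w_j |a_j ⊗ b_j⟩⟨a_j ⊗ b_j|`, with the bras taken through `inn`. -/
def tmulProjSum (inn : (H1 ⊗[ℂ] H2) →ₗ⋆[ℂ] (H1 ⊗[ℂ] H2) →ₗ[ℂ] ℂ)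
    (w : ι → ℝ) (a : ι → H1) (b : ι → H2) (v : H1 ⊗[ℂ] H2) : H1 ⊗[ℂ] H2 :=
  ∑ j, (w j : ℂ) • (inn (a j ⊗ₜ[ℂ] b j) v • (a j ⊗ₜ[ℂ] b j))

variable {inn : (H1 ⊗[ℂ] H2) →ₗ⋆[ℂ] (H1 ⊗[ℂ] H2) →ₗ[ℂ] ℂ} (hinn : ∀ (x1 y1 : H1) (x2 y2 : H2),
  inn (x1 ⊗ₜ[ℂ] x2) (y1 ⊗ₜ[ℂ] y2) = (inner ℂ x1 y1 : ℂ) * (inner ℂ x2 y2 : ℂ))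
include hinn

theorem inn_tmul_tmulProjSum (w : ι → ℝ) (a : ι → H1) (b : ι → H2) (φ : H1) (β : H2) :
    inn (φ ⊗ₜ[ℂ] β) (tmulProjSum inn w a b (φ ⊗ₜ[ℂ] β)) =
      ((∑ j, w j * (Complex.normSq (inner ℂ (a j) φ) * Complex.normSq (inner ℂ (b j) β)) : ℝ) :
        ℂ) := by
  simp only [tmulProjSum, map_sum, map_smul, hinn, smul_eq_mul, Complex.ofReal_sum,
    Complex.ofReal_mul, ← Complex.mul_conj, inner_conj_symm]
  exact Finset.sum_congr rfl fun j _ ↦ by ring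

theorem inner_eq_zero_of_tmulProjSum_eq_zero {w : ι → ℝ} {a : ι → H1} {b : ι → H2}
    (hw : ∀ j, 0 < w j) (hb : ∀ j, b j ≠ 0) {φ : H1}
    (hφ : ∀ β : H2, tmulProjSum inn w a b (φ ⊗ₜ[ℂ] β) = 0) (k : ι) :
    inner ℂ (a k) φ = 0 := by
  have hnonneg : ∀ j ∈ Finset.univ, 0 ≤ w j *
      (Complex.normSq (inner ℂ (a j) φ) * Complex.normSq (inner ℂ (b j) (b k))) :=
    fun j _ ↦ mul_nonneg (hw j).le (mul_nonneg (Complex.normSq_nonneg _) (Complex.normSq_nonneg _))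
  have hsum := inn_tmul_tmulProjSum hinn w a b φ (b k)
  rw [hφ, map_zero, eq_comm, Complex.ofReal_eq_zero,
    Finset.sum_eq_zero_iff_of_nonneg hnonneg] at hsum
  simpa [(hw k).ne', hb k] using hsum k (Finset.mem_univ k)

theorem tmulProjSum_tmul_eq_zero_iff {w : ι → ℝ} {a : ι → H1} {b : ι → H2}
    (hw : ∀ j, 0 < w j) (hb : ∀ j, b j ≠ 0) (φ : H1) :
    (∀ β : H2, tmulProjSum inn w a b (φ ⊗ₜ[ℂ] β) = 0) ↔
      ∀ j, inner ℂ (a j) φ = 0 := by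
  refine ⟨inner_eq_zero_of_tmulProjSum_eq_zero hinn hw hb, fun ha β ↦ ?_⟩
  simp [tmulProjSum, hinn, ha]

end TmulProjSum

theorem span_eq_orthogonal_of_nullspace_general
    {H1 H2 : Type*}
    [NormedAddCommGroup H1] [InnerProductSpace ℂ H1]
    [NormedAddCommGroup H2] [InnerProductSpace ℂ H2]
    (inn : (H1 ⊗[ℂ] H2) →ₗ⋆[ℂ] (H1 ⊗[ℂ] H2) →ₗ[ℂ] ℂ)
    (hinn : ∀ (x1 y1 : H1) (x2 y2 : H2),
      inn (x1 ⊗ₜ[ℂ] x2) (y1 ⊗ₜ[ℂ] y2) = (inner ℂ x1 y1 : ℂ) * (inner ℂ x2 y2 : ℂ))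
    {n : ℕ} (a : Fin n → H1) (b : Fin n → H2) (w : Fin n → ℝ)
    (hb1 : ∀ j, ‖b j‖ = 1) (hw : ∀ j, 0 < w j) :
    (Submodule.span ℂ (Set.range a) : Set H1) =
      {x : H1 | ∀ φ : H1,
        (∀ β : H2,
          ∑ j, (w j : ℂ) • (inn (a j ⊗ₜ[ℂ] b j) (φ ⊗ₜ[ℂ] β) • (a j ⊗ₜ[ℂ] b j)) = 0) →
        (inner ℂ φ x : ℂ) = 0} := by
  set K := Submodule.span ℂ (Set.range a)
  have : FiniteDimensional ℂ K := FiniteDimensional.span_of_finite ℂ (Set.finite_range a)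
  have : CompleteSpace K := FiniteDimensional.complete ℂ K
  have hb : ∀ j, b j ≠ 0 := fun j ↦ norm_ne_zero_iff.mp (by simp [hb1 j])
  ext x
  rw [SetLike.mem_coe, ← K.orthogonal_orthogonal, Submodule.mem_orthogonal, Set.mem_ofPred_eq]
  refine forall_congr' fun φ ↦ imp_congr_left ?_
  rw [mem_orthogonal_span_range_iff]
  exact (tmulProjSum_tmul_eq_zero_iff hinn hw hb φ).symm

/-- For `ρ = Σ_j w_j |a_j ⊗ b_j⟩⟨a_j ⊗ b_j|`, the span of the `a_j` equals the orthogonal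
complement in `H1` of the null space `N1 = {φ ∈ H1 : ρ(φ ⊗ β) = 0 for all β ∈ H2}`.
Here `inn` is the inner product on `H1 ⊗[ℂ] H2`, the unique sesquilinear form with
`inn (x1 ⊗ x2) (y1 ⊗ y2) = ⟨x1,y1⟩⟨x2,y2⟩`, and the rank-one projector `|x⟩⟨x|` sends
`y` to `inn x y • x`. -/
theorem span_eq_orthogonal_of_nullspace
    {H1 H2 : Type*}
    [NormedAddCommGroup H1] [InnerProductSpace ℂ H1] [FiniteDimensional ℂ H1]
    [NormedAddCommGroup H2] [InnerProductSpace ℂ H2] [FiniteDimensional ℂ H2]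
    (inn : (H1 ⊗[ℂ] H2) →ₗ⋆[ℂ] (H1 ⊗[ℂ] H2) →ₗ[ℂ] ℂ)
    (hinn : ∀ (x1 y1 : H1) (x2 y2 : H2),
      inn (x1 ⊗ₜ[ℂ] x2) (y1 ⊗ₜ[ℂ] y2) = (inner ℂ x1 y1 : ℂ) * (inner ℂ x2 y2 : ℂ))
    {n : ℕ} (a : Fin n → H1) (b : Fin n → H2) (w : Fin n → ℝ)
    (ha1 : ∀ j, ‖a j‖ = 1) (hb1 : ∀ j, ‖b j‖ = 1) (hw : ∀ j, 0 < w j) :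
    (Submodule.span ℂ (Set.range a) : Set H1) =
      {x : H1 | ∀ φ : H1,
        (∀ β : H2,
          ∑ j, (w j : ℂ) • (inn (a j ⊗ₜ[ℂ] b j) (φ ⊗ₜ[ℂ] β) • (a j ⊗ₜ[ℂ] b j)) = 0) →
        (inner ℂ φ x : ℂ) = 0} :=
  span_eq_orthogonal_of_nullspace_general inn hinn a b w hb1 hw
end

section
/- Let H1 and H2 be finite-dimensional complex Hilbert spaces and let Ψ, Φ ∈ H1 ⊗ H2. If for every linear operator A on H1 one has ⟨Ψ, (A ⊗ I)Ψ⟩ = ⟨Φ, (A ⊗ I)Φ⟩ (equivalently, the partial traces of |Ψ⟩⟨Ψ| and |Φ⟩⟨Φ| over H2 coincide), then there exists a unitary operator U on H2 such that Ψ = (I ⊗ U)Φ. -/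
/-!
Write `Ψ = ∑ i, eᵢ ⊗ ψᵢ` and `Φ = ∑ i, eᵢ ⊗ φᵢ` in an orthonormal basis `(eᵢ)` of `H1`, where
`ψᵢ = (⟨eᵢ| ⊗ I) Ψ`. Testing the hypothesis on the rank-one operators `A = |eᵢ⟩⟨eⱼ|` shows that
the families `(ψᵢ)` and `(φᵢ)` have the same Gram matrix. Hence `φᵢ ↦ ψᵢ` is a well-defined
isometry from the span of the `φᵢ` into `H2`, which extends to a unitary `U` of `H2`, and then
`Ψ = ∑ i, eᵢ ⊗ U φᵢ = (I ⊗ U) Φ`. The abstract form `inn` is the inner product of the tensor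
product space, since both are sesquilinear and agree on pure tensors.
-/

open scoped TensorProduct InnerProductSpace

section

variable {𝕜 E F : Type*} [RCLike 𝕜]
  [NormedAddCommGroup E] [InnerProductSpace 𝕜 E]
  [NormedAddCommGroup F] [InnerProductSpace 𝕜 F]

section Gram

variable {ι : Type*} [Fintype ι] {φ ψ : ι → F}

theorem inner_linearCombination_eq_of_inner_eq (h : ∀ i j, ⟪ψ i, ψ j⟫_𝕜 = ⟪φ i, φ j⟫_𝕜)
    (c d : ι → 𝕜) :
    ⟪Fintype.linearCombination 𝕜 ψ c, Fintype.linearCombination 𝕜 ψ d⟫_𝕜 =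
      ⟪Fintype.linearCombination 𝕜 φ c, Fintype.linearCombination 𝕜 φ d⟫_𝕜 := by
  simp only [Fintype.linearCombination_apply, inner_sum, sum_inner, inner_smul_left,
    inner_smul_right, h]

theorem linearCombination_eq_of_inner_eq (h : ∀ i j, ⟪ψ i, ψ j⟫_𝕜 = ⟪φ i, φ j⟫_𝕜)
    {c d : ι → 𝕜}
    (hcd : Fintype.linearCombination 𝕜 φ c = Fintype.linearCombination 𝕜 φ d) :
    Fintype.linearCombination 𝕜 ψ c = Fintype.linearCombination 𝕜 ψ d := by
  rw [← sub_eq_zero, ← map_sub, ← inner_self_eq_zero (𝕜 := 𝕜),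
    inner_linearCombination_eq_of_inner_eq h, map_sub, hcd, sub_self, inner_zero_left]

theorem exists_linearIsometryEquiv_apply_eq_of_inner_eq [FiniteDimensional 𝕜 F]
    (h : ∀ i j, ⟪ψ i, ψ j⟫_𝕜 = ⟪φ i, φ j⟫_𝕜) :
    ∃ U : F ≃ₗᵢ[𝕜] F, ∀ i, U (φ i) = ψ i := by
  classical
  set P := Fintype.linearCombination 𝕜 φ
  set Q := Fintype.linearCombination 𝕜 ψ
  obtain ⟨s, hs⟩ := P.rangeRestrict.exists_rightInverse_of_surjective P.range_rangeRestrict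
  have hPs : ∀ x, P (s x) = x := fun x => congr(Subtype.val ($hs x))
  -- `Q ∘ s` is the map `∑ cᵢ φᵢ ↦ ∑ cᵢ ψᵢ` on the span of the `φᵢ`
  let L : LinearMap.range P →ₗᵢ[𝕜] F := (Q ∘ₗ s).isometryOfInner fun x y => by
    simp [Q, P, inner_linearCombination_eq_of_inner_eq h, hPs]
  refine ⟨L.extend.toLinearIsometryEquiv rfl, fun i => ?_⟩
  have hφ : P (Pi.single i 1) = φ i := by simp [P]
  have hψ : Q (Pi.single i 1) = ψ i := by simp [Q]
  rw [LinearIsometry.coe_toLinearIsometryEquiv, ← hφ, ← hψ]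
  exact (L.extend_apply ⟨_, Pi.single i 1, rfl⟩).trans
    (linearCombination_eq_of_inner_eq h (hPs _))

end Gram

namespace TensorProduct

theorem eq_innerₛₗ_of_tmul (inn : E ⊗[𝕜] F →ₗ⋆[𝕜] E ⊗[𝕜] F →ₗ[𝕜] 𝕜)
    (h : ∀ (x x' : E) (y y' : F), inn (x ⊗ₜ y) (x' ⊗ₜ y') = ⟪x, x'⟫_𝕜 * ⟪y, y'⟫_𝕜) :
    inn = innerₛₗ 𝕜 :=
  ext' fun x y => ext' fun x' y' => h x x' y y'

variable (𝕜 F) in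
/-- The partial inner product `⟨v| ⊗ I`. -/
noncomputable def innerLeft (v : E) : E ⊗[𝕜] F →ₗ[𝕜] F :=
  TensorProduct.lid 𝕜 F ∘ₗ (innerₛₗ 𝕜 v).rTensor F

@[simp]
theorem innerLeft_tmul (v x : E) (y : F) : innerLeft 𝕜 F v (x ⊗ₜ[𝕜] y) = ⟪v, x⟫_𝕜 • y := by
  simp [innerLeft]

theorem inner_rTensor_rankOne (v u : E) (z w : E ⊗[𝕜] F) :
    ⟪z, (InnerProductSpace.rankOne 𝕜 v u : E →ₗ[𝕜] E).rTensor F w⟫_𝕜 =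
      ⟪innerLeft 𝕜 F v z, innerLeft 𝕜 F u w⟫_𝕜 := by
  induction z using TensorProduct.induction_on with
  | zero => simp
  | add z z' hz hz' => simp [inner_add_left, hz, hz']
  | tmul x y =>
    induction w using TensorProduct.induction_on with
    | zero => simp
    | add w w' hw hw' => simp [inner_add_right, hw, hw']
    | tmul x' y' =>
      simp only [LinearMap.rTensor_tmul, ContinuousLinearMap.coe_coe,
        InnerProductSpace.rankOne_apply, inner_tmul, inner_smul_right, innerLeft_tmul,
        inner_smul_left, inner_conj_symm]
      ring

theorem _root_.OrthonormalBasis.sum_tmul_innerLeft {ι : Type*} [Fintype ι]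
    (b : OrthonormalBasis ι 𝕜 E) (z : E ⊗[𝕜] F) :
    ∑ i, b i ⊗ₜ innerLeft 𝕜 F (b i) z = z := by
  induction z using TensorProduct.induction_on with
  | zero => simp
  | add z z' hz hz' => simp [tmul_add, Finset.sum_add_distrib, hz, hz']
  | tmul x y => simp_rw [innerLeft_tmul, tmul_smul, smul_tmul', ← sum_tmul, b.sum_repr']

theorem exists_linearIsometryEquiv_eq_lTensor_of_inner_rTensor_eq
    [FiniteDimensional 𝕜 E] [FiniteDimensional 𝕜 F] {Ψ Φ : E ⊗[𝕜] F}
    (h : ∀ A : E →ₗ[𝕜] E, ⟪Ψ, A.rTensor F Ψ⟫_𝕜 = ⟪Φ, A.rTensor F Φ⟫_𝕜) :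
    ∃ U : F ≃ₗᵢ[𝕜] F, Ψ = U.toLinearMap.lTensor E Φ := by
  let b := stdOrthonormalBasis 𝕜 E
  have hgram : ∀ i j, ⟪innerLeft 𝕜 F (b i) Ψ, innerLeft 𝕜 F (b j) Ψ⟫_𝕜 =
      ⟪innerLeft 𝕜 F (b i) Φ, innerLeft 𝕜 F (b j) Φ⟫_𝕜 := fun i j => by
    simpa only [inner_rTensor_rankOne] using h (InnerProductSpace.rankOne 𝕜 (b i) (b j))
  obtain ⟨U, hU⟩ := exists_linearIsometryEquiv_apply_eq_of_inner_eq hgram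
  refine ⟨U, ?_⟩
  calc Ψ = ∑ i, b i ⊗ₜ innerLeft 𝕜 F (b i) Ψ := (b.sum_tmul_innerLeft Ψ).symm
    _ = U.toLinearMap.lTensor E (∑ i, b i ⊗ₜ innerLeft 𝕜 F (b i) Φ) := by simp [map_sum, hU]
    _ = U.toLinearMap.lTensor E Φ := by rw [b.sum_tmul_innerLeft]

end TensorProduct

end

/-- If two vectors `Ψ, Φ` of `H1 ⊗ H2` have the same partial trace over `H2` (expressed
as equality of the expectations `⟨Ψ, (A ⊗ I)Ψ⟩ = ⟨Φ, (A ⊗ I)Φ⟩` for every operator `A` on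
`H1`), then `Ψ = (I ⊗ U)Φ` for some unitary `U` on `H2`.  Here `inn` is the inner product
on `H1 ⊗[ℂ] H2`, the unique sesquilinear form with
`inn (x1 ⊗ x2) (y1 ⊗ y2) = ⟨x1,y1⟩⟨x2,y2⟩`. -/
theorem exists_unitary_of_partialTrace_eq
    {H1 H2 : Type*}
    [NormedAddCommGroup H1] [InnerProductSpace ℂ H1] [FiniteDimensional ℂ H1]
    [NormedAddCommGroup H2] [InnerProductSpace ℂ H2] [FiniteDimensional ℂ H2]
    (inn : (H1 ⊗[ℂ] H2) →ₗ⋆[ℂ] (H1 ⊗[ℂ] H2) →ₗ[ℂ] ℂ)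
    (hinn : ∀ (x1 y1 : H1) (x2 y2 : H2),
      inn (x1 ⊗ₜ[ℂ] x2) (y1 ⊗ₜ[ℂ] y2) = (inner ℂ x1 y1 : ℂ) * (inner ℂ x2 y2 : ℂ))
    (Ψ Φ : H1 ⊗[ℂ] H2)
    (h : ∀ A : H1 →ₗ[ℂ] H1,
      inn Ψ (TensorProduct.map A LinearMap.id Ψ) =
      inn Φ (TensorProduct.map A LinearMap.id Φ)) :
    ∃ U : H2 →ₗ[ℂ] H2,
      (∀ x y : H2, (inner ℂ (U x) (U y) : ℂ) = inner ℂ x y) ∧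
      Function.Surjective U ∧
      Ψ = TensorProduct.map LinearMap.id U Φ := by
  rw [TensorProduct.eq_innerₛₗ_of_tmul inn hinn] at h
  obtain ⟨U, hU⟩ := TensorProduct.exists_linearIsometryEquiv_eq_lTensor_of_inner_rTensor_eq h
  exact ⟨U.toLinearMap, U.inner_map_map, U.surjective, hU⟩
end

section
/- Let H1 and H2 be finite-dimensional complex Hilbert spaces, let a_1,...,a_n ∈ H1 be linearly independent, let b_1,...,b_n ∈ H2 be non-collinear unit vectors, and let s_1,...,s_n be complex numbers. If Σ_{j=1}^{n} s_j (a_j ⊗ b_j) = α ⊗ β for some α ∈ H1 and β ∈ H2 with α ⊗ β ≠ 0, then there is exactly one index j ∈ {1,...,n} with s_j ≠ 0. -/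
open scoped TensorProduct

/-! Applying `f ⊗ id`, where `f` is a coordinate functional of the linearly independent family
`a` (`f (a j) = δ_{ij}`), to `∑ j, s j • (a j ⊗ b j) = α ⊗ β` gives `s i • b i = f α • β`. So every
`b i` with `s i ≠ 0` is a multiple of `β`; two such unit vectors are unimodular multiples of each
other, which non-collinearity forbids. At least one `s i` is nonzero since `α ⊗ β ≠ 0`. -/

section CoordinateFunctional

variable {K V ι : Type*} [Field K] [AddCommGroup V] [Module K V] {a : ι → V}

theorem LinearIndependent.exists_linearMap_apply_eq_single (ha : LinearIndependent K a) (i : ι) :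
    ∃ f : V →ₗ[K] K, ∀ j, f (a j) = Finsupp.single j 1 i := by
  obtain ⟨f, hf⟩ := LinearMap.exists_extend ((Module.Basis.span ha).coord i)
  refine ⟨f, fun j => ?_⟩
  have hspan : a j ∈ Submodule.span K (Set.range a) := Submodule.subset_span ⟨j, rfl⟩
  calc f (a j) = (Module.Basis.span ha).coord i ⟨a j, hspan⟩ := by rw [← hf]; rfl
    _ = Finsupp.single j 1 i := by
      rw [Module.Basis.coord_apply, ← Module.Basis.span_apply ha j, Module.Basis.repr_self]

variable {W : Type*} [AddCommGroup W] [Module K W] [Fintype ι]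

theorem LinearIndependent.exists_eq_smul_of_sum_tmul_eq (ha : LinearIndependent K a)
    {b : ι → W} {α : V} {β : W} (h : ∑ j, a j ⊗ₜ[K] b j = α ⊗ₜ β) (i : ι) :
    ∃ c : K, b i = c • β := by
  obtain ⟨f, hf⟩ := ha.exists_linearMap_apply_eq_single i
  refine ⟨f α, ?_⟩
  have := congrArg (TensorProduct.lift ((LinearMap.lsmul K W).comp f)) h
  simpa [hf, Finsupp.single_apply] using this

end CoordinateFunctional

theorem isCollinear_of_eq_smul {H : Type*} [NormedAddCommGroup H] [NormedSpace ℂ H]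
    {u v w : H} (hu : ‖u‖ = 1) (hv : ‖v‖ = 1) (hwu : ∃ c : ℂ, u = c • w)
    (hwv : ∃ d : ℂ, v = d • w) : IsCollinear u v := by
  obtain ⟨c, rfl⟩ := hwu
  obtain ⟨d, rfl⟩ := hwv
  have hd : d ≠ 0 := by
    rintro rfl
    simp at hv
  have huv : c • w = (c / d) • d • w := by rw [smul_smul, div_mul_cancel₀ _ hd]
  refine ⟨c / d, ?_, huv⟩
  rwa [huv, norm_smul, hv, mul_one] at hu

theorem factorable_iff_one_nonzero_coeff_general
    {H1 H2 : Type*}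
    [NormedAddCommGroup H1] [InnerProductSpace ℂ H1]
    [NormedAddCommGroup H2] [InnerProductSpace ℂ H2]
    {n : ℕ} (a : Fin n → H1) (b : Fin n → H2) (s : Fin n → ℂ)
    (hali : LinearIndependent ℂ a)
    (hb1 : ∀ j, ‖b j‖ = 1)
    (hbnc : ∀ i j, i ≠ j → ¬ IsCollinear (b i) (b j))
    (α : H1) (β : H2)
    (hfac : ∑ j, s j • (a j ⊗ₜ[ℂ] b j) = α ⊗ₜ[ℂ] β)
    (hne : α ⊗ₜ[ℂ] β ≠ 0) :
    ∃! j : Fin n, s j ≠ 0 := by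
  have hmul : ∀ j, ∃ c : ℂ, s j • b j = c • β :=
    hali.exists_eq_smul_of_sum_tmul_eq (by simpa only [TensorProduct.tmul_smul] using hfac)
  have hparallel : ∀ j, s j ≠ 0 → ∃ c : ℂ, b j = c • β := fun j hj => by
    obtain ⟨c, hc⟩ := hmul j
    exact ⟨(s j)⁻¹ * c, by rw [mul_smul, ← hc, inv_smul_smul₀ hj]⟩
  obtain ⟨i, hi⟩ : ∃ i, s i ≠ 0 := by
    by_contra! h
    exact hne (by simp [← hfac, h])
  refine ⟨i, hi, fun j hj => ?_⟩
  by_contra hji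
  exact hbnc j i hji
    (isCollinear_of_eq_smul (hb1 j) (hb1 i) (hparallel j hj) (hparallel i hi))

/-- With `a_j` linearly independent and `b_j` non-collinear unit vectors, if
`Σ_j s_j (a_j ⊗ b_j)` is a nonzero factorable vector `α ⊗ β` of `H1 ⊗ H2`, then exactly
one of the coefficients `s_j` is nonzero. -/
theorem factorable_iff_one_nonzero_coeff
    {H1 H2 : Type*}
    [NormedAddCommGroup H1] [InnerProductSpace ℂ H1] [FiniteDimensional ℂ H1]
    [NormedAddCommGroup H2] [InnerProductSpace ℂ H2] [FiniteDimensional ℂ H2]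
    {n : ℕ} (a : Fin n → H1) (b : Fin n → H2) (s : Fin n → ℂ)
    (hali : LinearIndependent ℂ a)
    (hb1 : ∀ j, ‖b j‖ = 1)
    (hbnc : ∀ i j, i ≠ j → ¬ IsCollinear (b i) (b j))
    (α : H1) (β : H2)
    (hfac : ∑ j, s j • (a j ⊗ₜ[ℂ] b j) = α ⊗ₜ[ℂ] β)
    (hne : α ⊗ₜ[ℂ] β ≠ 0) :
    ∃! j : Fin n, s j ≠ 0 :=
  factorable_iff_one_nonzero_coeff_general a b s hali hb1 hbnc α β hfac hne
end
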